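/- arXiv:2412.18368 — 2 statements merged into one kernel-verified Lean document; each statement's English description precedes it below -/
import Mathlib

section
/- For every positive integer n, pₙ = ∑_{0 ≤ j ≤ i ≤ n-1} (-1)^{i+j} · h_{n-i+j} · e_{i-j}, where pₙ, hₖ, eₖ are the power sum, complete homogeneous, and elementary symmetric functions. -/
open scoped Classical

/-- The `n`-th complete homogeneous symmetric function in the variables `x₀, x₁, …`,
as a formal power series: the sum of all monomials of degree `n`. -/
noncomputable def hsym (n : ℕ) : MvPowerSeries ℕ ℚ :=
  fun d => if (d.sum fun _ k => k) = n then 1 else 0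

/-- The `n`-th elementary symmetric function: the sum of all squarefree monomials
of degree `n`. -/
noncomputable def esym (n : ℕ) : MvPowerSeries ℕ ℚ :=
  fun d => if (d.sum fun _ k => k) = n ∧ ∀ i, d i ≤ 1 then 1 else 0

/-- The `n`-th power sum symmetric function `∑ⱼ xⱼⁿ`. -/
noncomputable def psym (n : ℕ) : MvPowerSeries ℕ ℚ :=
  fun d => if ∃ j, d = Finsupp.single j n then 1 else 0

/-- `h` indexed by an integer, vanishing for negative indices. -/
noncomputable def hsymZ (k : ℤ) : MvPowerSeries ℕ ℚ :=
  if 0 ≤ k then hsym k.toNat else 0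

/-!
The coefficient of a monomial `x^d` of degree `a + b` in `h_a e_b` counts the ways to choose a
squarefree monomial of degree `b` dividing `x^d`, i.e. it is `C(m, b)` with `m` the number of
variables in `x^d`. Comparing coefficients, the theorem becomes the binomial identity
`∑_{i<n} ∑_{j≤i} (-1)^(i+j) C(m, i-j) = [m = 1]` for `1 ≤ m ≤ n`: the inner sum is a partial
alternating sum, equal to `(-1)^i C(m-1, i)`, and the outer one is then the full alternating
sum of the binomial coefficients `C(m-1, i)`.
-/

open Finset MvPowerSeries

lemma sum_range_succ_neg_one_pow_add_mul_choose_sub (M i : ℕ) :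
    ∑ j ∈ range (i + 1), (-1 : ℤ) ^ (i + j) * (M + 1).choose (i - j) =
      (-1) ^ i * M.choose i := by
  rw [← Int.alternating_sum_range_choose_eq_choose,
    ← sum_range_reflect (fun k => (-1 : ℤ) ^ k * (M + 1).choose k), Nat.add_sub_cancel]
  refine sum_congr rfl fun j hj => ?_
  have hji : i + j = (i - j) + 2 * j := by
    have := mem_range.1 hj
    omega
  rw [hji, pow_add, pow_mul, neg_one_sq, one_pow, mul_one]

lemma sum_range_sum_range_neg_one_pow_add_mul_choose_sub {n m : ℕ} (hm : 1 ≤ m) (hmn : m ≤ n) :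
    ∑ i ∈ range n, ∑ j ∈ range (i + 1), (-1 : ℤ) ^ (i + j) * m.choose (i - j) =
      if m = 1 then 1 else 0 := by
  obtain ⟨M, rfl⟩ : ∃ M, m = M + 1 := ⟨m - 1, by omega⟩
  simp_rw [sum_range_succ_neg_one_pow_add_mul_choose_sub]
  have hvanish : ∀ i ∈ range n, i ∉ range (M + 1) → (-1 : ℤ) ^ i * M.choose i = 0 :=
    fun i _ hi => by rw [Nat.choose_eq_zero_of_lt (by simpa using hi), Nat.cast_zero, mul_zero]
  rw [← sum_subset (range_subset_range.2 hmn) hvanish, Int.alternating_sum_range_choose]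
  simp

section SquarefreeFinsupp

variable {σ : Type*}

lemma Finsupp.card_support_le_degree (d : σ →₀ ℕ) : #d.support ≤ d.degree := by
  rw [degree_apply, card_eq_sum_ones]
  exact Finset.sum_le_sum fun i hi => Nat.one_le_iff_ne_zero.2 (mem_support_iff.1 hi)

lemma Finsupp.card_support_eq_degree_of_le_one {e : σ →₀ ℕ} (he : ∀ i, e i ≤ 1) :
    #e.support = e.degree := by
  rw [degree_apply, card_eq_sum_ones]
  refine Finset.sum_congr rfl fun i hi => ?_
  have := mem_support_iff.1 hi
  have := he i
  omega

lemma Finsupp.support_indicator_one (S : Finset σ) :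
    (Finsupp.indicator S fun _ _ => (1 : ℕ)).support = S := by
  ext i
  simp

lemma Finsupp.indicator_support_eq_self_of_le_one {e : σ →₀ ℕ} (he : ∀ i, e i ≤ 1) :
    (Finsupp.indicator e.support fun _ _ => 1) = e := by
  ext i
  have := he i
  simp only [indicator_apply, mem_support_iff]
  split_ifs <;> omega

lemma Finsupp.exists_eq_single_iff {d : σ →₀ ℕ} {n : ℕ} (hn : n ≠ 0) :
    (∃ j, d = single j n) ↔ d.degree = n ∧ #d.support = 1 := by
  constructor
  · rintro ⟨j, rfl⟩
    simp [Finsupp.support_single, hn]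
  · rintro ⟨hd, hcard⟩
    obtain ⟨j, b, -, rfl⟩ := card_support_eq_one'.1 hcard
    exact ⟨j, by rw [← hd, degree_single]⟩

/-- A squarefree monomial `e` dividing `d`, written as the pair `(d - e, e)`, is determined by its
support, which can be any subset of the support of `d`. -/
lemma card_filter_antidiagonal_snd_le_one [DecidableEq σ] (d : σ →₀ ℕ) (b : ℕ) :
    #{p ∈ antidiagonal d | p.2.degree = b ∧ ∀ i, p.2 i ≤ 1} = (#d.support).choose b := by
  rw [← card_powersetCard]
  refine card_nbij' (fun p => p.2.support)
    (fun S => (d - Finsupp.indicator S fun _ _ => 1, Finsupp.indicator S fun _ _ => 1)) ?_ ?_ ?_ ?_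
  · rintro ⟨e', e⟩ hp
    rw [mem_coe, mem_filter, HasAntidiagonal.mem_antidiagonal] at hp
    obtain ⟨rfl, rfl, he⟩ := hp
    rw [mem_coe, mem_powersetCard]
    refine ⟨fun i hi => ?_, Finsupp.card_support_eq_degree_of_le_one he⟩
    rw [Finsupp.mem_support_iff] at hi ⊢
    simp [hi]
  · intro S hS
    rw [mem_coe, mem_powersetCard] at hS
    obtain ⟨hsub, rfl⟩ := hS
    have hle : (Finsupp.indicator S fun _ _ => 1) ≤ d := fun i => by
      by_cases hi : i ∈ S
      · simpa [hi, Nat.one_le_iff_ne_zero] using hsub hi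
      · simp [hi]
    rw [mem_coe, mem_filter, HasAntidiagonal.mem_antidiagonal]
    refine ⟨tsub_add_cancel_of_le hle, ?_, fun i => ?_⟩
    · rw [← Finsupp.card_support_eq_degree_of_le_one, Finsupp.support_indicator_one]
      intro i
      by_cases hi : i ∈ S <;> simp [hi]
    · by_cases hi : i ∈ S <;> simp [hi]
  · rintro ⟨e', e⟩ hp
    rw [mem_coe, mem_filter, HasAntidiagonal.mem_antidiagonal] at hp
    obtain ⟨rfl, -, he⟩ := hp
    simp [Finsupp.indicator_support_eq_self_of_le_one he]
  · intro S _
    exact Finsupp.support_indicator_one S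

end SquarefreeFinsupp

lemma MvPowerSeries.coeff_neg_one_pow_mul {σ R : Type*} [CommRing R] (d : σ →₀ ℕ) (k : ℕ)
    (φ : MvPowerSeries σ R) :
    coeff d ((-1) ^ k * φ) = (-1) ^ k * coeff d φ := by
  rw [← map_one (C (σ := σ)), ← map_neg, ← map_pow, coeff_C_mul]

lemma coeff_psym {n : ℕ} (hn : 0 < n) (d : ℕ →₀ ℕ) :
    coeff d (psym n) = if d.degree = n ∧ #d.support = 1 then 1 else 0 := by
  rw [coeff_apply, psym, if_congr (Finsupp.exists_eq_single_iff hn.ne') rfl rfl]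

lemma coeff_hsym_mul_esym (d : ℕ →₀ ℕ) (a b : ℕ) :
    coeff d (hsym a * esym b) = if d.degree = a + b then ((#d.support).choose b : ℚ) else 0 := by
  rw [coeff_mul]
  have hterm : ∀ p : (ℕ →₀ ℕ) × (ℕ →₀ ℕ), coeff p.1 (hsym a) * coeff p.2 (esym b) =
      if p.1.degree = a ∧ p.2.degree = b ∧ ∀ i, p.2 i ≤ 1 then 1 else 0 := by
    intro p
    rw [coeff_apply, coeff_apply, hsym, esym, ite_zero_mul_ite_zero, mul_one]
    exact if_congr Iff.rfl rfl rfl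
  simp_rw [hterm, sum_boole]
  split_ifs with hd
  · rw [← card_filter_antidiagonal_snd_le_one d b]
    congr 2
    apply Finset.filter_congr
    intro p hp
    refine ⟨fun h => h.2, fun h => ⟨?_, h⟩⟩
    have := congrArg Finsupp.degree (HasAntidiagonal.mem_antidiagonal.1 hp)
    rw [map_add] at this
    omega
  · rw [filter_false_of_mem, card_empty, Nat.cast_zero]
    rintro p hp ⟨h1, h2, -⟩
    exact hd (by rw [← HasAntidiagonal.mem_antidiagonal.1 hp, map_add, h1, h2])

theorem psym_eq_double_sum_h_mul_e (n : ℕ) (hn : 0 < n) :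
    psym n
      = ∑ i ∈ Finset.range n, ∑ j ∈ Finset.range (i + 1),
          (-1 : MvPowerSeries ℕ ℚ) ^ (i + j) * hsym (n - i + j) * esym (i - j) := by
  ext d
  have hterm : ∀ i ∈ range n, ∀ j ∈ range (i + 1),
      coeff d ((-1) ^ (i + j) * hsym (n - i + j) * esym (i - j)) =
        if d.degree = n then (-1 : ℚ) ^ (i + j) * (#d.support).choose (i - j) else 0 := by
    intro i hi j hj
    have hdeg : n - i + j + (i - j) = n := by
      have := mem_range.1 hi
      have := mem_range.1 hj
      omega
    rw [mul_assoc, coeff_neg_one_pow_mul, coeff_hsym_mul_esym, hdeg, mul_ite, mul_zero]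
  simp_rw [coeff_psym hn, map_sum]
  rw [sum_congr rfl fun i hi => sum_congr rfl (hterm i hi)]
  by_cases hd : d.degree = n
  · have hpos : 1 ≤ #d.support := card_pos.2 <| Finsupp.support_nonempty_iff.2 <| by
      rintro rfl
      rw [map_zero] at hd
      omega
    have hle : #d.support ≤ n := hd ▸ Finsupp.card_support_le_degree d
    simp only [hd, true_and, if_true]
    exact_mod_cast (sum_range_sum_range_neg_one_pow_add_mul_choose_sub hpos hle).symm
  · simp [hd]
end

section
/- For every positive integer n and real numbers with x_j = 1/j², the power sum evaluation ∑_{j≥1} 1/j^{2n} equals (-1)^{n+1} · (2π)^{2n} · B_{2n} / (2 · (2n)!), and combining with the Hoffman evaluations of e and h, the identity ∑_{0 ≤ j ≤ i ≤ n-1} (-1)^{i+j} · [(-1)^{n-i+j} π^{2(n-i+j)} (2 - 2^{2(n-i+j)}) B_{2(n-i+j)}/(2(n-i+j))!] · [π^{2(i-j)}/(2(i-j)+1)!] = (-1)^{n+1}(2π)^{2n} B_{2n}/(2(2n)!) holds. -/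
/-!
The first identity is Euler's evaluation of `ζ(2n)`. In the double sum, every term equals
`(-1)^n π^{2n} a_{n-d} / (2d+1)!` with `d = i - j` and `a_m = (2 - 2^{2m}) B_{2m} / (2m)!`, and each
`d < n` occurs `n - d` times (this is Newton's identity `p_n = ∑ (-1)^d (n-d) h_{n-d} e_d`).
Multiplied by `2 (2n)!`, the remaining rational identity becomes
`∑_k C(2n,k) (2 - 2^{k+1}) B_{k+1} = -2^{2n} B_{2n}`, in which only odd `k` contribute. By Pascal's
rule the left side is `T(2n+1) - T(2n)` for `T(N) = ∑_k C(N,k) (2 - 2^k) B_k`, and `T(N) = 2^N B_N`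
for `N ≠ 1`: combine `∑_k C(N,k) B_k = B_N` with `∑_k C(N,k) 2^k B_k = (2 - 2^N) B_N`, the
coefficientwise form of the duplication identity `B(2x) (e^x + 1) = 2 B(x)` for `B(x) = x / (e^x - 1)`.
-/

open Real Finset PowerSeries
open scoped Nat

theorem rescale_two_bernoulliPowerSeries_mul_exp_add_one :
    rescale (2 : ℚ) (bernoulliPowerSeries ℚ) * (exp ℚ + 1) = 2 * bernoulliPowerSeries ℚ := by
  have hB := bernoulliPowerSeries_mul_exp_sub_one ℚ
  have hexp_sub_one : exp ℚ - 1 ≠ 0 := fun h => by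
    simpa [coeff_exp] using congrArg (coeff 1) h
  have hexp_sq : rescale (2 : ℚ) (exp ℚ) = exp ℚ * exp ℚ := by
    simpa [pow_two] using (exp_pow_eq_rescale_exp (A := ℚ) 2).symm
  have hX : rescale (2 : ℚ) (X : ℚ⟦X⟧) = 2 * X := by
    rw [rescale_X, map_ofNat]
  apply mul_right_cancel₀ hexp_sub_one
  calc rescale (2 : ℚ) (bernoulliPowerSeries ℚ) * (exp ℚ + 1) * (exp ℚ - 1)
      = rescale (2 : ℚ) (bernoulliPowerSeries ℚ * (exp ℚ - 1)) := by
        rw [map_mul, map_sub, map_one, hexp_sq]; ring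
    _ = 2 * bernoulliPowerSeries ℚ * (exp ℚ - 1) := by rw [hB, hX, mul_assoc, hB]

theorem sum_choose_mul_two_pow_mul_bernoulli (N : ℕ) :
    ∑ k ∈ range (N + 1), (N.choose k : ℚ) * (2 ^ k * bernoulli k) = (2 - 2 ^ N) * bernoulli N := by
  have h := congrArg (coeff N) rescale_two_bernoulliPowerSeries_mul_exp_add_one
  rw [mul_add, mul_one, map_add, coeff_mul, Nat.sum_antidiagonal_eq_sum_range_succ_mk,
    ← map_ofNat (C (R := ℚ)), coeff_C_mul, Nat.succ_eq_add_one] at h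
  simp only [coeff_rescale, bernoulliPowerSeries, coeff_mk, coeff_exp, Algebra.algebraMap_self,
    RingHom.id_apply] at h
  calc ∑ k ∈ range (N + 1), (N.choose k : ℚ) * (2 ^ k * bernoulli k)
      = N ! * ∑ k ∈ range (N + 1), 2 ^ k * (bernoulli k / k !) * (1 / (N - k)!) := by
        rw [mul_sum]
        refine sum_congr rfl fun k hk => ?_
        rw [Nat.cast_choose ℚ (Nat.lt_succ_iff.mp (mem_range.mp hk))]
        field_simp
    _ = (2 - 2 ^ N) * bernoulli N := by
        rw [eq_sub_of_add_eq h]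
        field_simp

theorem sum_choose_mul_bernoulli_eq_self {N : ℕ} (hN : N ≠ 1) :
    ∑ k ∈ range (N + 1), (N.choose k : ℚ) * bernoulli k = bernoulli N := by
  rw [sum_range_succ, sum_bernoulli, if_neg hN, Nat.choose_self, Nat.cast_one, one_mul, zero_add]

theorem sum_choose_mul_two_sub_two_pow_mul_bernoulli {N : ℕ} (hN : N ≠ 1) :
    ∑ k ∈ range (N + 1), (N.choose k : ℚ) * ((2 - 2 ^ k) * bernoulli k) = 2 ^ N * bernoulli N := by
  calc ∑ k ∈ range (N + 1), (N.choose k : ℚ) * ((2 - 2 ^ k) * bernoulli k)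
      = 2 * ∑ k ∈ range (N + 1), (N.choose k : ℚ) * bernoulli k
          - ∑ k ∈ range (N + 1), (N.choose k : ℚ) * (2 ^ k * bernoulli k) := by
        rw [mul_sum, ← sum_sub_distrib]
        exact sum_congr rfl fun k _ => by ring
    _ = 2 ^ N * bernoulli N := by
        rw [sum_choose_mul_bernoulli_eq_self hN, sum_choose_mul_two_pow_mul_bernoulli]
        ring

-- For `i = 0` it is the factor `2 - 2¹`, not `B₁ = -1/2`, that vanishes.
theorem two_sub_two_pow_mul_bernoulli_two_mul_add_one (i : ℕ) :
    (2 - 2 ^ (2 * i + 1) : ℚ) * bernoulli (2 * i + 1) = 0 := by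
  rcases Nat.eq_zero_or_pos i with rfl | hi
  · norm_num
  · rw [bernoulli_eq_zero_of_odd (odd_two_mul_add_one i) (by omega), mul_zero]

theorem sum_choose_mul_two_sub_two_pow_mul_bernoulli_succ {n : ℕ} (hn : n ≠ 0) :
    ∑ k ∈ range (2 * n + 1), ((2 * n).choose k : ℚ) * ((2 - 2 ^ (k + 1)) * bernoulli (k + 1))
      = -(2 ^ (2 * n) * bernoulli (2 * n)) := by
  have h := sum_choose_succ_mul (fun k _ => (2 - 2 ^ k : ℚ) * bernoulli k) (2 * n)
  rw [sum_choose_mul_two_sub_two_pow_mul_bernoulli (by omega),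
    sum_choose_mul_two_sub_two_pow_mul_bernoulli (by omega),
    bernoulli_eq_zero_of_odd (odd_two_mul_add_one n) (by omega)] at h
  linear_combination -h

theorem Finset.sum_range_two_mul {M : Type*} [AddCommMonoid M] (f : ℕ → M) (n : ℕ) :
    ∑ k ∈ range (2 * n), f k = ∑ i ∈ range n, f (2 * i) + ∑ i ∈ range n, f (2 * i + 1) := by
  induction n with
  | zero => simp
  | succ n ih =>
    rw [Nat.mul_succ, sum_range_succ, sum_range_succ, ih, sum_range_succ, sum_range_succ]
    abel

theorem sum_choose_odd_mul_two_sub_two_pow_mul_bernoulli {n : ℕ} (hn : n ≠ 0) :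
    ∑ i ∈ range n, ((2 * n).choose (2 * i + 1) : ℚ) * ((2 - 2 ^ (2 * i + 2)) * bernoulli (2 * i + 2))
      = -(2 ^ (2 * n) * bernoulli (2 * n)) := by
  rw [← sum_choose_mul_two_sub_two_pow_mul_bernoulli_succ hn, sum_range_succ, sum_range_two_mul]
  simp only [two_sub_two_pow_mul_bernoulli_two_mul_add_one, mul_zero, sum_const_zero, zero_add,
    add_zero]

theorem Finset.sum_range_sum_range_succ_tsub {M : Type*} [AddCommMonoid M] (f : ℕ → M) (n : ℕ) :
    ∑ i ∈ range n, ∑ j ∈ range (i + 1), f (i - j) = ∑ d ∈ range n, (n - d) • f d := by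
  induction n with
  | zero => simp
  | succ n ih =>
    have hreflect : ∑ j ∈ range (n + 1), f (n - j) = ∑ d ∈ range (n + 1), f d := by
      simpa using sum_range_reflect f (n + 1)
    have hcount : ∀ d ∈ range (n + 1), (n + 1 - d) • f d = (n - d) • f d + f d := fun d hd => by
      rw [Nat.sub_add_comm (Nat.lt_succ_iff.mp (mem_range.mp hd)), succ_nsmul]
    rw [sum_range_succ, ih, hreflect, sum_congr rfl hcount, sum_add_distrib,
      sum_range_succ (fun d => (n - d) • f d), Nat.sub_self, zero_smul, add_zero]

theorem natCast_succ_div_factorial_mul_factorial (i m : ℕ) :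
    ((i + 1 : ℕ) : ℚ) / ((2 * i + 2)! * (2 * m + 1)!)
      = ((2 * (i + m + 1)).choose (2 * i + 1) : ℚ) / (2 * (2 * (i + m + 1))!) := by
  rw [show 2 * (i + m + 1) = (2 * i + 1) + (2 * m + 1) by ring, Nat.cast_add_choose,
    Nat.factorial_succ (2 * i + 1)]
  field_simp
  push_cast
  ring

theorem sum_range_sub_mul_bernoulli_div_factorial {n : ℕ} (hn : n ≠ 0) :
    ∑ d ∈ range n, ((n - d : ℕ) : ℚ) * ((2 - 2 ^ (2 * (n - d))) * bernoulli (2 * (n - d))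
        / (2 * (n - d))! / (2 * d + 1)!)
      = -(2 ^ (2 * n) * bernoulli (2 * n)) / (2 * (2 * n)!) := by
  rw [← sum_range_reflect, ← sum_choose_odd_mul_two_sub_two_pow_mul_bernoulli hn, sum_div]
  refine sum_congr rfl fun i hi => ?_
  obtain ⟨m, rfl⟩ : ∃ m, n = i + m + 1 := ⟨n - 1 - i, by have := mem_range.mp hi; omega⟩
  have hsub : i + m + 1 - (i + m + 1 - 1 - i) = i + 1 := by omega
  have hm : i + m + 1 - 1 - i = m := by omega
  rw [hsub, hm, show 2 * (i + 1) = 2 * i + 2 by ring]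
  calc _ = ((i + 1 : ℕ) : ℚ) / ((2 * i + 2)! * (2 * m + 1)!)
        * ((2 - 2 ^ (2 * i + 2)) * bernoulli (2 * i + 2)) := by ring
    _ = _ := by rw [natCast_succ_div_factorial_mul_factorial]; ring

theorem tsum_one_div_nat_add_one_pow_two_mul {n : ℕ} (hn : n ≠ 0) :
    ∑' j : ℕ, (1 : ℝ) / ((j : ℝ) + 1) ^ (2 * n)
      = (-1) ^ (n + 1) * (2 * π) ^ (2 * n) * bernoulli (2 * n) / (2 * (2 * n)!) := by
  have h := (hasSum_nat_add_iff' 1).mpr (hasSum_zeta_nat hn)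
  rw [sum_range_one, Nat.cast_zero, zero_pow (by omega), div_zero, sub_zero] at h
  push_cast at h
  have htwo : (2 : ℝ) ^ (2 * n) = 2 * 2 ^ (2 * n - 1) := by
    rw [← pow_succ']; congr 1; omega
  rw [h.tsum_eq, mul_pow, htwo]
  ring

theorem power_sum_and_double_sum_bernoulli (n : ℕ) (hn : 0 < n) :
    (∑' j : ℕ, (1 : ℝ) / ((j : ℝ) + 1) ^ (2 * n))
        = (-1 : ℝ) ^ (n + 1) * (2 * π) ^ (2 * n) * ((bernoulli (2 * n) : ℚ) : ℝ) /
            (2 * (Nat.factorial (2 * n) : ℝ))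
      ∧ ∑ i ∈ Finset.range n, ∑ j ∈ Finset.range (i + 1),
            (-1 : ℝ) ^ (i + j) *
              ((-1 : ℝ) ^ (n - i + j) * π ^ (2 * (n - i + j)) * (2 - 2 ^ (2 * (n - i + j))) *
                  ((bernoulli (2 * (n - i + j)) : ℚ) : ℝ) /
                (Nat.factorial (2 * (n - i + j)) : ℝ)) *
              (π ^ (2 * (i - j)) / (Nat.factorial (2 * (i - j) + 1) : ℝ))
        = (-1 : ℝ) ^ (n + 1) * (2 * π) ^ (2 * n) * ((bernoulli (2 * n) : ℚ) : ℝ) /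
            (2 * (Nat.factorial (2 * n) : ℝ)) := by
  refine ⟨tsum_one_div_nat_add_one_pow_two_mul hn.ne', ?_⟩
  set q : ℕ → ℚ := fun d =>
    (2 - 2 ^ (2 * (n - d))) * bernoulli (2 * (n - d)) / (2 * (n - d))! / (2 * d + 1)!
  calc _ = ∑ i ∈ range n, ∑ j ∈ range (i + 1), (-1) ^ n * π ^ (2 * n) * (q (i - j) : ℝ) := by
        refine sum_congr rfl fun i hi => sum_congr rfl fun j hj => ?_
        obtain ⟨d, rfl⟩ : ∃ d, i = j + d := ⟨i - j, by have := mem_range.mp hj; omega⟩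
        have hd : j + d < n := mem_range.mp hi
        have hsign : (-1 : ℝ) ^ (j + d + j) * (-1) ^ (n - d) = (-1) ^ n := by
          rw [← pow_add, show j + d + j + (n - d) = n + 2 * j by omega, pow_add, pow_mul]
          norm_num
        have hpi : π ^ (2 * (n - d)) * π ^ (2 * d) = π ^ (2 * n) := by
          rw [← pow_add]; congr 1; omega
        rw [show n - (j + d) + j = n - d by omega, Nat.add_sub_cancel_left]
        simp only [q]
        push_cast
        rw [← hsign, ← hpi]
        ring
    _ = (-1) ^ n * π ^ (2 * n) * ((∑ d ∈ range n, ((n - d : ℕ) : ℚ) * q d : ℚ) : ℝ) := by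
        simp only [← mul_sum]
        rw [sum_range_sum_range_succ_tsub (fun d => (q d : ℝ))]
        push_cast [nsmul_eq_mul]
        rfl
    _ = _ := by
        rw [sum_range_sub_mul_bernoulli_div_factorial hn.ne']
        push_cast
        ring
end
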